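/- Let F be a free group of rank n ≥ 2 and let d be an even positive integer. Then there exists a distinct difference configuration in F of diameter at most d with cardinality at least 2n(2n−1)^{d/3 − (4/3)·log_{2n−1}(d/3) − 5}. -/

import Mathlib

/-!
Fix stems, the reduced words of a length `ℓ ≈ d/3`, and extend every stem by a suffix of length
`k ≈ d/6 + log d` chosen at random, so that all elements have norm `ℓ + k ≤ d/2`. If
`g⁻¹h = g'⁻¹h'` for two different pairs, comparing reduced words shows that `g, h` branch apart at
some position `j < ℓ` where `g', h'` branch apart too, while beyond `j` the word `g` continues as
`g'` and `h` as `h'`; in particular `g, g'` get the same suffix, and so do `h, h'`. Such a branching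
pattern of stems is determined by `j`, `g` and `h'`, so among `P` stems there are at most `ℓ P²`
of them, and each one survives the random suffixes with probability `(2n-1)^(-2k)`. Taking `k`
with `2ℓP ≤ (2n-1)^(2k)` and deleting one stem of every surviving pattern keeps at least
`P / 2 = n (2n-1)^(ℓ-1)` elements. When the claimed exponent is at most `-1`, a pair suffices.
-/

/-- A subset `D` of a group is a distinct difference configuration. -/
def IsDDC {G : Type*} [Group G] (D : Set G) : Prop :=
  ∀ g ∈ D, ∀ h ∈ D, ∀ g' ∈ D, ∀ h' ∈ D,
    g ≠ h → g' ≠ h' → g⁻¹ * h = g'⁻¹ * h' → g = g' ∧ h = h'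

open Finset Real

namespace List

variable {β : Type*}

theorem exists_eq_append_cons_of_ne {u v : List β} (hlen : u.length = v.length) (hne : u ≠ v) :
    ∃ (p A B : List β) (a b : β), u = p ++ a :: A ∧ v = p ++ b :: B ∧ a ≠ b := by
  induction u generalizing v with
  | nil => cases v <;> simp_all
  | cons x u ih =>
    cases v with
    | nil => simp at hlen
    | cons y v =>
      by_cases hxy : x = y
      · subst hxy
        obtain ⟨p, A, B, a, b, rfl, rfl, hab⟩ := ih (by simpa using hlen) (by simpa using hne)
        exact ⟨x :: p, A, B, a, b, rfl, rfl, hab⟩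
      · exact ⟨[], u, v, x, y, rfl, rfl, hxy⟩

/-- For reduced words, this is how `u⁻¹ v = u'⁻¹ v'` looks: both pairs cancel a common prefix of
length `j` and leave the same word. -/
def SharesDifferenceAt (j : ℕ) (u v u' v' : List β) : Prop :=
  u.take j = v.take j ∧ u'.take j = v'.take j ∧ u.drop j = u'.drop j ∧ v.drop j = v'.drop j ∧
    u[j]? ≠ v[j]?

instance [DecidableEq β] (j : ℕ) (u v u' v' : List β) :
    Decidable (SharesDifferenceAt j u v u' v') :=
  inferInstanceAs (Decidable (_ ∧ _))

namespace SharesDifferenceAt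

variable {j : ℕ} {u v u' v' : List β}

theorem cross_ne (h : SharesDifferenceAt j u v u' v') : u ≠ v' ∧ u' ≠ v ∧ u' ≠ v' := by
  obtain ⟨-, -, hu, hv, hj⟩ := h
  have hu' : u[j]? = u'[j]? := by rw [← Nat.add_zero j, ← getElem?_drop, ← getElem?_drop, hu]
  have hv' : v[j]? = v'[j]? := by rw [← Nat.add_zero j, ← getElem?_drop, ← getElem?_drop, hv]
  refine ⟨?_, ?_, ?_⟩ <;> rintro rfl <;> simp_all

theorem eq_append (h : SharesDifferenceAt j u v u' v') :
    u' = v'.take j ++ u.drop j ∧ v = u.take j ++ v'.drop j := by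
  obtain ⟨huv, hu'v', hu, hv, -⟩ := h
  exact ⟨by rw [← hu'v', hu, take_append_drop], by rw [huv, ← hv, take_append_drop]⟩

theorem left_eq_iff (h : SharesDifferenceAt j u v u' v') : u = u' ↔ v = v' := by
  obtain ⟨hu', hv⟩ := h.eq_append
  obtain ⟨huv, hu'v', -, -, -⟩ := h
  constructor
  · rintro rfl
    rw [hv, hu'v', take_append_drop]
  · rintro rfl
    rw [hu', ← huv, take_append_drop]

end SharesDifferenceAt

end List

theorem card_filter_apply_eq_and_apply_eq_mul_sq {β γ : Type*} [Fintype β] [DecidableEq β]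
    [Fintype γ] [DecidableEq γ] {a a' b b' : β} (ha : a ≠ a') (hb : b ≠ b') (hba' : b ≠ a')
    (hab' : a ≠ b') (ha'b' : a' ≠ b') :
    #{f : β → γ | f a = f a' ∧ f b = f b'} * Fintype.card γ ^ 2 =
      Fintype.card γ ^ Fintype.card β := by
  let φ : {f : β → γ // f a = f a' ∧ f b = f b'} × γ × γ ≃ (β → γ) :=
    { toFun := fun ⟨f, c, c'⟩ => Function.update (Function.update f.1 a' c) b' c'
      invFun := fun g => ⟨⟨Function.update (Function.update g a' (g a)) b' (g b), by
        simp [ha, hb, hba', hab', ha'b']⟩, g a', g b'⟩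
      left_inv := by
        rintro ⟨⟨f, hfa, hfb⟩, c, c'⟩
        ext x <;> simp [Function.update_apply, ha, hb, hba', hab', ha'b']
        split_ifs <;> simp_all
      right_inv := fun g => by
        ext x
        simp only [Function.update_apply]
        split_ifs <;> simp_all }
  rw [← Fintype.card_fun, ← Fintype.card_congr φ, Fintype.card_prod, Fintype.card_prod, sq,
    Fintype.card_subtype]

/-- The probabilistic method: on average over `f`, a proportion `1 / |γ|²` of the constraints
`f (a i) = f (a' i) ∧ f (b i) = f (b' i)` holds. -/
theorem exists_card_filter_apply_eq_and_apply_eq_mul_sq_le {ι β γ : Type*} [Fintype β]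
    [DecidableEq β] [Fintype γ] [DecidableEq γ] [Nonempty γ] (S : Finset ι) (a a' b b' : ι → β)
    (hS : ∀ i ∈ S, a i ≠ a' i ∧ b i ≠ b' i ∧ b i ≠ a' i ∧ a i ≠ b' i ∧ a' i ≠ b' i) :
    ∃ f : β → γ, #{i ∈ S | f (a i) = f (a' i) ∧ f (b i) = f (b' i)} * Fintype.card γ ^ 2 ≤ #S := by
  have hsum : ∑ f : β → γ, #{i ∈ S | f (a i) = f (a' i) ∧ f (b i) = f (b' i)} *
      Fintype.card γ ^ 2 = ∑ _f : β → γ, #S := by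
    simp only [card_filter, sum_mul]
    rw [sum_comm, sum_const, card_univ, Fintype.card_fun, smul_eq_mul, mul_comm,
      ← sum_const_nat]
    intro i hi
    obtain ⟨ha, hb, hba', hab', ha'b'⟩ := hS i hi
    rw [← sum_mul, ← card_filter, card_filter_apply_eq_and_apply_eq_mul_sq ha hb hba' hab' ha'b']
  obtain ⟨f, -, hf⟩ := exists_le_of_sum_le univ_nonempty hsum.le
  exact ⟨f, hf⟩

theorem isDDC_pair_one {G : Type*} [Group G] {x : G} (hx : x⁻¹ ≠ x) : IsDDC ({1, x} : Set G) := by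
  simp only [IsDDC, Set.mem_insert_iff, Set.mem_singleton_iff]
  rintro g (rfl | rfl) h (rfl | rfl) g' (rfl | rfl) h' (rfl | rfl) <;> simp_all [eq_comm]

namespace FreeGroup

variable {α : Type*}

theorem norm_inv_mul_le [DecidableEq α] (g h : FreeGroup α) :
    (g⁻¹ * h).norm ≤ g.norm + h.norm := by
  simpa using norm_mul_le g⁻¹ h

theorem IsReduced.invRev {L : List (α × Bool)} (h : IsReduced L) : IsReduced (invRev L) := by
  rw [FreeGroup.invRev, IsReduced, List.isChain_reverse, List.isChain_map]
  refine h.imp ?_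
  rintro ⟨a, s⟩ ⟨b, t⟩ hab rfl
  simpa [eq_comm] using hab rfl

theorem isReduced_invRev_append {a b : α × Bool} {A B : List (α × Bool)}
    (hA : IsReduced (a :: A)) (hB : IsReduced (b :: B)) (hab : a ≠ b) :
    IsReduced (invRev (a :: A) ++ b :: B) := by
  refine List.isChain_append.mpr ⟨hA.invRev, hB, ?_⟩
  rintro _ hx _ ⟨⟩
  simp only [invRev, List.map_cons, List.reverse_cons, List.getLast?_append,
    List.getLast?_singleton, Option.some_or, Option.mem_def, Option.some.injEq] at hx
  subst hx
  obtain ⟨a, s⟩ := a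
  obtain ⟨b, t⟩ := b
  rintro rfl
  cases s <;> cases t <;> simp_all

theorem mk_append_inv_mul_mk_append (p u v : List (α × Bool)) :
    (mk (p ++ u))⁻¹ * mk (p ++ v) = mk (invRev u ++ v) := by
  simp only [← mul_mk, ← inv_mk]
  group

theorem IsReduced.toWord_mk [DecidableEq α] {L : List (α × Bool)} (h : IsReduced L) :
    (mk L).toWord = L := by
  rw [FreeGroup.toWord_mk, h.reduce_eq]

theorem IsReduced.norm_mk [DecidableEq α] {L : List (α × Bool)} (h : IsReduced L) :
    (mk L).norm = L.length := by
  rw [norm, h.toWord_mk]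

theorem mk_inj_of_isReduced {L M : List (α × Bool)} (hL : IsReduced L) (hM : IsReduced M) :
    mk L = mk M ↔ L = M := by
  classical
  exact ⟨fun h => by rw [← hL.toWord_mk, ← hM.toWord_mk, h], congrArg mk⟩

theorem exists_sharesDifferenceAt_of_inv_mul_eq {u v u' v' : List (α × Bool)}
    (hu : IsReduced u) (hv : IsReduced v) (hu' : IsReduced u') (hv' : IsReduced v')
    (hlen : u.length = v.length) (hlen' : u'.length = v'.length) (hlen'' : u.length = u'.length)
    (huv : u ≠ v) (huv' : u' ≠ v') (h : (mk u)⁻¹ * mk v = (mk u')⁻¹ * mk v') :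
    ∃ j, List.SharesDifferenceAt j u v u' v' := by
  obtain ⟨p, A, B, a, b, rfl, rfl, hab⟩ := List.exists_eq_append_cons_of_ne hlen huv
  obtain ⟨p', A', B', a', b', rfl, rfl, hab'⟩ := List.exists_eq_append_cons_of_ne hlen' huv'
  have hred : ∀ {p L : List (α × Bool)}, IsReduced (p ++ L) → IsReduced L :=
    fun {p _} h => h.infix ⟨p, [], by simp⟩
  rw [mk_append_inv_mul_mk_append, mk_append_inv_mul_mk_append,
    mk_inj_of_isReduced (isReduced_invRev_append (hred hu) (hred hv) hab)
      (isReduced_invRev_append (hred hu') (hred hv') hab')] at h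
  have hlenh := congrArg List.length h
  simp only [List.length_append, List.length_cons, invRev_length] at hlen hlen' hlen'' hlenh
  have hsplit := List.append_inj h (by simp only [invRev_length, List.length_cons]; omega)
  obtain ⟨rfl, rfl⟩ : a = a' ∧ A = A' := by simpa using invRev_injective hsplit.1
  obtain ⟨rfl, rfl⟩ : b = b' ∧ B = B' := by simpa using hsplit.2
  have hp : p.length = p'.length := by omega
  refine ⟨p.length, ?_, ?_, ?_, ?_, ?_⟩ <;> simp [hp, hab]

variable (α) in
/-- An enumeration, for every letter `z`, of the `q` letters that may follow `z` in a reduced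
word. -/
structure SuccessorCode (q : ℕ) where
  next : α × Bool → Fin q → α × Bool
  no_cancel : ∀ z i, z.1 = (next z i).1 → z.2 = (next z i).2
  injective : ∀ z, Function.Injective (next z)

theorem nonempty_successorCode [Fintype α] [DecidableEq α] {n : ℕ} (hcard : Fintype.card α = n) :
    Nonempty (SuccessorCode α (2 * n - 1)) := by
  have hcard' (z : α × Bool) : Fintype.card {l // l ≠ (z.1, !z.2)} = 2 * n - 1 := by
    rw [Fintype.card_subtype_compl, Fintype.card_subtype_eq, Fintype.card_prod, Fintype.card_bool,
      hcard, mul_comm]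
  let E z := (Fintype.equivFinOfCardEq (hcard' z)).symm
  refine ⟨⟨fun z i => (E z i).1, fun z i hz => ?_, fun z i j h => (E z).injective (Subtype.ext h)⟩⟩
  have hl : (E z i : α × Bool) ≠ (z.1, !z.2) := (E z i).2
  by_contra hs
  exact hl (Prod.ext hz.symm (by simpa [eq_comm, Bool.eq_not] using hs))

section Spell

variable {q : ℕ} (e : SuccessorCode α q)

def spell : α × Bool → List (Fin q) → List (α × Bool)
  | z, [] => [z]
  | z, i :: t => z :: spell (e.next z i) t

variable {e}

@[simp]
theorem length_spell (z : α × Bool) (t : List (Fin q)) : (spell e z t).length = t.length + 1 := by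
  induction t generalizing z with
  | nil => rfl
  | cons i t ih => simp [spell, ih]

theorem isReduced_spell (z : α × Bool) (t : List (Fin q)) : IsReduced (spell e z t) := by
  induction t generalizing z with
  | nil => exact .singleton
  | cons i t ih =>
    cases t with
    | nil => exact isReduced_cons_cons.mpr ⟨e.no_cancel z i, .singleton⟩
    | cons i' t => exact isReduced_cons_cons.mpr ⟨e.no_cancel z i, ih (e.next z i)⟩

theorem spell_inj {z z' : α × Bool} {t t' : List (Fin q)} :
    spell e z t = spell e z' t' ↔ z = z' ∧ t = t' := by
  refine ⟨fun h => ?_, fun ⟨hz, ht⟩ => hz ▸ ht ▸ rfl⟩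
  have hlen : t.length = t'.length := by simpa using congrArg List.length h
  induction t generalizing z z' t' with
  | nil => cases t' <;> simp_all [spell]
  | cons i t ih =>
    cases t' with
    | nil => simp at hlen
    | cons i' t' =>
      simp only [spell, List.cons.injEq] at h
      obtain ⟨rfl, h⟩ := h
      obtain ⟨hi, rfl⟩ := ih h (by simpa using hlen)
      exact ⟨rfl, by rw [e.injective z hi]⟩

theorem take_succ_spell (z : α × Bool) (t : List (Fin q)) (i : ℕ) :
    (spell e z t).take (i + 1) = spell e z (t.take i) := by
  induction t generalizing z i with
  | nil => simp [spell]
  | cons a t ih => cases i <;> simp [spell, ih]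

theorem exists_drop_spell_append (z : α × Bool) {t : List (Fin q)} {i : ℕ} (hi : i ≤ t.length) :
    ∃ z', ∀ s, (spell e z (t ++ s)).drop i = spell e z' (t.drop i ++ s) := by
  induction t generalizing z i with
  | nil => exact ⟨z, fun s => by simp_all⟩
  | cons a t ih =>
    cases i with
    | zero => exact ⟨z, fun s => rfl⟩
    | succ i =>
      obtain ⟨z', hz'⟩ := ih (e.next z a) (by simpa using hi)
      exact ⟨z', fun s => hz' s⟩

end Spell

variable (α) in
/-- A stem of length `m + 1` is encoded by its first letter and the codes of its other letters. -/
abbrev Stem (q m : ℕ) : Type _ := (α × Bool) × (Fin m → Fin q)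

theorem card_stem [Fintype α] (q m : ℕ) :
    Fintype.card (Stem α q m) = 2 * Fintype.card α * q ^ m := by
  simp [Stem, Fintype.card_prod, mul_comm]

section Stem

variable {q : ℕ} {e : SuccessorCode α q} {m k : ℕ}

variable (e) in
def stemWord (p : Stem α q m) : List (α × Bool) :=
  spell e p.1 (List.ofFn p.2)

variable (e) in
def extendedWord (p : Stem α q m) (s : Fin k → Fin q) : List (α × Bool) :=
  spell e p.1 (List.ofFn p.2 ++ List.ofFn s)

theorem stemWord_injective : Function.Injective (stemWord e (m := m)) := fun p p' h => by
  obtain ⟨hz, ht⟩ := spell_inj.1 h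
  exact Prod.ext hz (List.ofFn_injective ht)

@[simp]
theorem length_extendedWord (p : Stem α q m) (s : Fin k → Fin q) :
    (extendedWord e p s).length = m + 1 + k := by
  simp [extendedWord]
  omega

theorem isReduced_extendedWord (p : Stem α q m) (s : Fin k → Fin q) :
    IsReduced (extendedWord e p s) :=
  isReduced_spell _ _

theorem take_extendedWord (p : Stem α q m) (s : Fin k → Fin q) :
    (extendedWord e p s).take (m + 1) = stemWord e p := by
  rw [extendedWord, take_succ_spell, List.take_left' (by simp), stemWord]

theorem take_stemWord {j : ℕ} (hj : j ≤ m + 1) (p : Stem α q m) (s : Fin k → Fin q) :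
    (stemWord e p).take j = (extendedWord e p s).take j := by
  rw [← take_extendedWord p s, List.take_take, min_eq_left hj]

theorem getElem?_stemWord {j : ℕ} (hj : j < m + 1) (p : Stem α q m) (s : Fin k → Fin q) :
    (stemWord e p)[j]? = (extendedWord e p s)[j]? := by
  rw [← take_extendedWord p s, List.getElem?_take_of_lt hj]

theorem eq_of_extendedWord_eq {p p' : Stem α q m} {s s' : Fin k → Fin q}
    (h : extendedWord e p s = extendedWord e p' s') : p = p' :=
  stemWord_injective (by rw [← take_extendedWord p s, h, take_extendedWord])

theorem drop_stemWord_eq_and_eq_of_drop_extendedWord_eq {j : ℕ} (hj : j ≤ m)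
    {p p' : Stem α q m} {s s' : Fin k → Fin q}
    (h : (extendedWord e p s).drop j = (extendedWord e p' s').drop j) :
    (stemWord e p).drop j = (stemWord e p').drop j ∧ s = s' := by
  obtain ⟨z, hz⟩ := exists_drop_spell_append (e := e) p.1 (t := List.ofFn p.2) (by simpa using hj)
  obtain ⟨z', hz'⟩ :=
    exists_drop_spell_append (e := e) p'.1 (t := List.ofFn p'.2) (by simpa using hj)
  rw [extendedWord, extendedWord, hz, hz', spell_inj] at h
  obtain ⟨rfl, h⟩ := h
  obtain ⟨hp, hs⟩ := List.append_inj h (by simp)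
  refine ⟨?_, List.ofFn_injective hs⟩
  rw [stemWord, stemWord, ← List.append_nil (List.ofFn p.2), ← List.append_nil (List.ofFn p'.2),
    hz, hz', hp]

variable (e) in
def extendedElem (f : Stem α q m → Fin k → Fin q) (p : Stem α q m) : FreeGroup α :=
  mk (extendedWord e p (f p))

theorem extendedElem_injective (f : Stem α q m → Fin k → Fin q) :
    Function.Injective (extendedElem e f) := fun _ _ h =>
  eq_of_extendedWord_eq
    ((mk_inj_of_isReduced (isReduced_extendedWord _ _) (isReduced_extendedWord _ _)).1 h)

theorem norm_extendedElem [DecidableEq α] (f : Stem α q m → Fin k → Fin q) (p : Stem α q m) :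
    (extendedElem e f p).norm = m + 1 + k := by
  rw [extendedElem, (isReduced_extendedWord (e := e) p (f p)).norm_mk, length_extendedWord]

/-- The branching position lies inside the stems because distinct stems already differ there;
beyond it the words of `x, x'` agree, and so do those of `y, y'`, suffixes included. -/
theorem exists_sharesDifferenceAt_stemWord_of_inv_mul_eq
    {f : Stem α q m → Fin k → Fin q} {x y x' y' : Stem α q m} (hxy : x ≠ y) (hxy' : x' ≠ y')
    (h : (extendedElem e f x)⁻¹ * extendedElem e f y =
      (extendedElem e f x')⁻¹ * extendedElem e f y')
    (hne : ¬(x = x' ∧ y = y')) :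
    ∃ j ≤ m, stemWord e x ≠ stemWord e x' ∧
      List.SharesDifferenceAt j (stemWord e x) (stemWord e y) (stemWord e x') (stemWord e y') ∧
      f x = f x' ∧ f y = f y' := by
  set W := fun p => extendedWord e p (f p)
  have hW : Function.Injective W := fun _ _ h => eq_of_extendedWord_eq h
  have hred : ∀ p, IsReduced (W p) := fun p => isReduced_extendedWord _ _
  obtain ⟨j, hjW⟩ := exists_sharesDifferenceAt_of_inv_mul_eq (hred x) (hred y) (hred x') (hred y')
    (by simp [W]) (by simp [W]) (by simp [W]) (hW.ne hxy) (hW.ne hxy') h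
  have hj : j ≤ m := by
    by_contra! hj
    refine hxy (stemWord_injective (e := e) ?_)
    have hmj : min (m + 1) j = m + 1 := min_eq_left hj
    rw [← take_extendedWord x (f x), ← take_extendedWord y (f y), ← hmj, ← List.take_take,
      ← List.take_take]
    exact congrArg _ hjW.1
  obtain ⟨hx, hfx⟩ := drop_stemWord_eq_and_eq_of_drop_extendedWord_eq hj hjW.2.2.1
  obtain ⟨hy, hfy⟩ := drop_stemWord_eq_and_eq_of_drop_extendedWord_eq hj hjW.2.2.2.1
  have hstem : List.SharesDifferenceAt j (stemWord e x) (stemWord e y) (stemWord e x')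
      (stemWord e y') := by
    refine ⟨?_, ?_, hx, hy, ?_⟩
    · rw [take_stemWord (by omega) x (f x), take_stemWord (by omega) y (f y)]
      exact hjW.1
    · rw [take_stemWord (by omega) x' (f x'), take_stemWord (by omega) y' (f y')]
      exact hjW.2.1
    · rw [getElem?_stemWord (by omega) x (f x), getElem?_stemWord (by omega) y (f y)]
      exact hjW.2.2.2.2
  refine ⟨j, hj, fun hc => hne ?_, hstem, hfx, hfy⟩
  exact ⟨stemWord_injective hc, stemWord_injective (hstem.left_eq_iff.1 hc)⟩

section Patterns

variable [Fintype α] [DecidableEq α]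

variable (e m) in
/-- Unlike a coincidence of differences, a branching pattern does not involve the suffixes, which
can therefore be chosen by averaging. -/
def branchingPatterns : Finset (ℕ × Stem α q m × Stem α q m × Stem α q m × Stem α q m) :=
  {t ∈ range (m + 1) ×ˢ univ | stemWord e t.2.1 ≠ stemWord e t.2.2.2.1 ∧
    List.SharesDifferenceAt t.1 (stemWord e t.2.1) (stemWord e t.2.2.1) (stemWord e t.2.2.2.1)
      (stemWord e t.2.2.2.2)}

/-- A pattern is determined by `j`, `x` and `y'`. -/
theorem card_branchingPatterns_le :
    #(branchingPatterns e m) ≤ (m + 1) * Fintype.card (Stem α q m) ^ 2 := by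
  have hmaps : ∀ t ∈ branchingPatterns e m, (t.1, t.2.1, t.2.2.2.2) ∈
      range (m + 1) ×ˢ (univ : Finset (Stem α q m)) ×ˢ univ := by
    intro t ht
    simp only [branchingPatterns, mem_filter, mem_product] at ht
    simpa using ht.1.1
  have hinjOn : Set.InjOn (fun t : ℕ × Stem α q m × Stem α q m × Stem α q m × Stem α q m =>
      (t.1, t.2.1, t.2.2.2.2)) (branchingPatterns e m) := by
    rintro ⟨j, x, y, x', y'⟩ ht ⟨_, _, y₂, x₂', _⟩ ht₂ h
    simp only [Prod.mk.injEq] at h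
    obtain ⟨rfl, rfl, rfl⟩ := h
    simp only [branchingPatterns, coe_filter, Set.mem_ofPred_eq] at ht ht₂
    obtain ⟨hx', hy⟩ := ht.2.2.eq_append
    obtain ⟨hx₂', hy₂⟩ := ht₂.2.2.eq_append
    rw [stemWord_injective (hx'.trans hx₂'.symm), stemWord_injective (hy.trans hy₂.symm)]
  calc #(branchingPatterns e m) ≤ _ := card_le_card_of_injOn _ hmaps hinjOn
    _ = _ := by simp [sq, mul_assoc]

variable (e) in
def collidingPatterns (f : Stem α q m → Fin k → Fin q) :
    Finset (ℕ × Stem α q m × Stem α q m × Stem α q m × Stem α q m) :=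
  {t ∈ branchingPatterns e m | f t.2.1 = f t.2.2.2.1 ∧ f t.2.2.1 = f t.2.2.2.2}

variable (e) in
def survivors (f : Stem α q m → Fin k → Fin q) : Finset (Stem α q m) :=
  univ \ (collidingPatterns e f).image (·.2.1)

theorem exists_card_collidingPatterns_mul_le (hq : 0 < q) :
    ∃ f : Stem α q m → Fin k → Fin q,
      #(collidingPatterns e f) * q ^ (2 * k) ≤ #(branchingPatterns e m) := by
  have : Nonempty (Fin q) := ⟨⟨0, hq⟩⟩
  obtain ⟨f, hf⟩ := exists_card_filter_apply_eq_and_apply_eq_mul_sq_le (γ := Fin k → Fin q)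
    (branchingPatterns e m) (·.2.1) (·.2.2.2.1) (·.2.2.1) (·.2.2.2.2) fun t ht => by
      simp only [branchingPatterns, mem_filter] at ht
      obtain ⟨-, hxx', hpat⟩ := ht
      obtain ⟨hxy', hx'y, hx'y'⟩ := hpat.cross_ne
      exact ⟨ne_of_apply_ne _ hxx', ne_of_apply_ne _ (mt hpat.left_eq_iff.2 hxx'),
        ne_of_apply_ne _ hx'y.symm, ne_of_apply_ne _ hxy', ne_of_apply_ne _ hx'y'⟩
  rw [Fintype.card_fun, Fintype.card_fin, Fintype.card_fin, ← pow_mul, mul_comm k] at hf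
  exact ⟨f, hf⟩

theorem card_le_card_survivors_add (f : Stem α q m → Fin k → Fin q) :
    Fintype.card (Stem α q m) ≤ #(survivors e f) + #(collidingPatterns e f) := by
  calc Fintype.card (Stem α q m)
      = #(survivors e f) + #((collidingPatterns e f).image (·.2.1)) := by
        rw [survivors, ← card_univ, card_sdiff_add_card_eq_card (subset_univ _)]
    _ ≤ #(survivors e f) + #(collidingPatterns e f) := by gcongr; exact card_image_le

theorem isDDC_image_extendedElem_survivors (f : Stem α q m → Fin k → Fin q) :
    IsDDC ((survivors e f).image (extendedElem e f) : Set (FreeGroup α)) := by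
  simp only [IsDDC, coe_image, Set.forall_mem_image]
  rintro x hx y - x' - y' - hxy hxy' h
  by_contra hne
  obtain ⟨j, hj, hxx', hpat, hfx, hfy⟩ := exists_sharesDifferenceAt_stemWord_of_inv_mul_eq
    (ne_of_apply_ne _ hxy) (ne_of_apply_ne _ hxy') h fun ⟨hx, hy⟩ => hne ⟨hx ▸ rfl, hy ▸ rfl⟩
  refine (mem_sdiff.1 hx).2 (mem_image.2 ⟨(j, x, y, x', y'), ?_, rfl⟩)
  simp only [collidingPatterns, branchingPatterns, mem_filter, mem_product, mem_range, mem_univ]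
  exact ⟨⟨⟨by omega, trivial⟩, hxx', hpat⟩, hfx, hfy⟩

theorem exists_isDDC_of_balanced (e : SuccessorCode α q) (hq : 0 < q)
    (hbal : 2 * (m + 1) * Fintype.card (Stem α q m) ≤ q ^ (2 * k)) :
    ∃ D : Finset (FreeGroup α), IsDDC (D : Set (FreeGroup α)) ∧ (∀ g ∈ D, g.norm = m + 1 + k) ∧
      Fintype.card (Stem α q m) ≤ 2 * #D := by
  obtain ⟨f, hf⟩ := exists_card_collidingPatterns_mul_le (e := e) (m := m) (k := k) hq
  refine ⟨(survivors e f).image (extendedElem e f), isDDC_image_extendedElem_survivors f, ?_, ?_⟩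
  · simp only [mem_image]
    rintro _ ⟨p, -, rfl⟩
    exact norm_extendedElem f p
  rw [card_image_of_injective _ (extendedElem_injective f)]
  set P := Fintype.card (Stem α q m)
  set B := #(collidingPatterns e f)
  rcases Nat.eq_zero_or_pos P with hP | hP
  · simp [hP]
  have hmul : (m + 1) * P * (2 * B) ≤ (m + 1) * P * P :=
    calc (m + 1) * P * (2 * B) = B * (2 * (m + 1) * P) := by ring
      _ ≤ B * q ^ (2 * k) := Nat.mul_le_mul_left B hbal
      _ ≤ (m + 1) * P ^ 2 := hf.trans card_branchingPatterns_le
      _ = (m + 1) * P * P := by ring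
  have hB : 2 * B ≤ P := Nat.le_of_mul_le_mul_left hmul (by positivity)
  have := card_le_card_survivors_add (e := e) f
  omega

end Patterns

end Stem

end FreeGroup

noncomputable def ddcExponent (n d : ℕ) : ℝ :=
  (d : ℝ) / 3 - (4 / 3) * logb (2 * n - 1) ((d : ℝ) / 3) - 5

theorem cast_two_mul_sub_one {n : ℕ} (hn : 1 ≤ n) : ((2 * n - 1 : ℕ) : ℝ) = 2 * n - 1 := by
  rw [Nat.cast_sub (by omega)]
  push_cast
  ring

theorem neg_one_le_logb_div_three {b x : ℝ} (hb : 3 ≤ b) (hx : 1 ≤ x) : -1 ≤ logb b (x / 3) := by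
  rw [le_logb_iff_rpow_le (by linarith) (by linarith), rpow_neg_one]
  calc b⁻¹ ≤ 3⁻¹ := inv_anti₀ (by norm_num) hb
    _ ≤ x / 3 := by linarith

theorem clog_two_mul_le_logb_div_three_add_three {q d : ℕ} (hq : 3 ≤ q) (hd : 1 ≤ d) :
    (Nat.clog q (2 * d) : ℝ) ≤ logb q ((d : ℝ) / 3) + 3 := by
  have hq' : (3 : ℝ) ≤ q := by exact_mod_cast hq
  have hd' : (1 : ℝ) ≤ d := by exact_mod_cast hd
  have hsix : logb q 6 ≤ 2 := by
    rw [logb_le_iff_le_rpow (by linarith) (by norm_num), rpow_two]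
    nlinarith
  have hsplit : logb q ((2 * d : ℕ) : ℝ) = logb q ((d : ℝ) / 3) + logb q 6 := by
    rw [← logb_mul (by positivity) (by norm_num)]
    push_cast
    ring_nf
  rw [← natCeil_logb_natCast]
  have := Nat.ceil_lt_add_one (logb_nonneg (by linarith) (by push_cast; linarith) :
    0 ≤ logb q ((2 * d : ℕ) : ℝ))
  linarith

/-- With `2d ≤ q^c`, stems of length `m + 1 = (d - c) / 3` and suffixes of length
`k = d/2 - (m + 1)` are balanced. -/
theorem exists_balanced_parameters_of_two_mul_le_pow {q n d c : ℕ} (hqn : q + 1 = 2 * n)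
    (hd : Even d) (hc : 2 * d ≤ q ^ c) (hcd : c + 3 ≤ d) :
    ∃ m k : ℕ, 2 * (m + 1 + k) ≤ d ∧ 2 * (m + 1) * (2 * n * q ^ m) ≤ q ^ (2 * k) ∧
      d ≤ 3 * m + c + 5 := by
  obtain ⟨r, rfl⟩ := hd
  refine ⟨(r + r - c) / 3 - 1, r - (r + r - c) / 3, by omega, ?_, by omega⟩
  set m := (r + r - c) / 3 - 1 with hm
  have hq : 1 ≤ q := by omega
  calc 2 * (m + 1) * (2 * n * q ^ m) ≤ 2 * (m + 1) * (2 * q * q ^ m) := by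
        gcongr
        omega
    _ = 4 * (m + 1) * q ^ (m + 1) := by ring
    _ ≤ 2 * (r + r) * q ^ (m + 1) := Nat.mul_le_mul_right _ (by omega)
    _ ≤ q ^ c * q ^ (m + 1) := by gcongr
    _ = q ^ (c + (m + 1)) := by ring
    _ ≤ q ^ (2 * (r - (r + r - c) / 3)) := Nat.pow_le_pow_right hq (by omega)

theorem exists_balanced_parameters {n d : ℕ} (hn : 2 ≤ n) (hd : 0 < d) (hdeven : Even d)
    (hE : -1 < ddcExponent n d) :
    ∃ m k : ℕ, 2 * (m + 1 + k) ≤ d ∧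
      2 * (m + 1) * (2 * n * (2 * n - 1) ^ m) ≤ (2 * n - 1) ^ (2 * k) ∧
      ddcExponent n d + 1 ≤ m := by
  have hn' : (2 : ℝ) ≤ n := by exact_mod_cast hn
  have hL := neg_one_le_logb_div_three (b := 2 * n - 1) (x := d) (by linarith)
    (by exact_mod_cast hd)
  have hc := clog_two_mul_le_logb_div_three_add_three (q := 2 * n - 1) (by omega) hd
  rw [cast_two_mul_sub_one (by omega)] at hc
  unfold ddcExponent at hE ⊢
  have hcd : Nat.clog (2 * n - 1) (2 * d) + 3 ≤ d := by
    have : (Nat.clog (2 * n - 1) (2 * d) : ℝ) + 3 < d := by linarith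
    exact_mod_cast this.le
  obtain ⟨m, k, hdiam, hbal, hdm⟩ :=
    exists_balanced_parameters_of_two_mul_le_pow (q := 2 * n - 1) (n := n) (by omega) hdeven
      (Nat.le_pow_clog (by omega) _) hcd
  refine ⟨m, k, hdiam, hbal, ?_⟩
  have : (d : ℝ) ≤ 3 * m + Nat.clog (2 * n - 1) (2 * d) + 5 := by exact_mod_cast hdm
  linarith

theorem two_mul_rpow_le_mul_pow {n : ℕ} (hn : 2 ≤ n) {E : ℝ} {m : ℕ} (hE : E + 1 ≤ m) :
    (2 * n : ℝ) * (2 * n - 1) ^ E ≤ n * (2 * n - 1) ^ m := by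
  have hn' : (2 : ℝ) ≤ n := by exact_mod_cast hn
  have hb : (2 : ℝ) ≤ 2 * n - 1 := by linarith
  calc (2 * n : ℝ) * (2 * n - 1) ^ E = n * ((2 * n - 1) ^ E * 2) := by ring
    _ ≤ n * ((2 * n - 1) ^ E * (2 * n - 1)) := by gcongr
    _ = n * (2 * n - 1) ^ (E + 1) := by rw [rpow_add_one (by linarith)]
    _ ≤ n * (2 * n - 1) ^ (m : ℝ) := by gcongr; linarith
    _ = n * (2 * n - 1) ^ m := by rw [rpow_natCast]

theorem exists_isDDC_of_ddcExponent_le {α : Type*} [Fintype α] [DecidableEq α] {n d : ℕ}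
    (hn : 2 ≤ n) (hcard : Fintype.card α = n) (hd : 2 ≤ d) (hE : ddcExponent n d ≤ -1) :
    ∃ D : Set (FreeGroup α), IsDDC D ∧ (∀ g ∈ D, ∀ h ∈ D, (g⁻¹ * h).norm ≤ d) ∧
      (2 * n : ℝ) * (2 * n - 1 : ℝ) ^ ddcExponent n d ≤ (D.ncard : ℝ) := by
  obtain ⟨a⟩ : Nonempty α := Fintype.card_pos_iff.1 (by omega)
  refine ⟨{1, FreeGroup.of a}, isDDC_pair_one (inv_ne_self.2 (FreeGroup.of_ne_one a)), ?_, ?_⟩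
  · have hle : ∀ g ∈ ({1, FreeGroup.of a} : Set (FreeGroup α)), g.norm ≤ 1 := by simp
    intro g hg h hh
    linarith [FreeGroup.norm_inv_mul_le g h, hle g hg, hle h hh]
  · rw [Set.ncard_pair (FreeGroup.one_ne_of a)]
    have hn' : (2 : ℝ) ≤ n := by exact_mod_cast hn
    calc (2 * n : ℝ) * (2 * n - 1) ^ ddcExponent n d ≤ 2 * n * (2 * n - 1) ^ (-1 : ℝ) := by
          gcongr
          linarith
      _ = 2 * n / (2 * n - 1) := by rw [rpow_neg_one, div_eq_mul_inv]
      _ ≤ 2 := by rw [div_le_iff₀ (by linarith)]; linarith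
      _ = ((2 : ℕ) : ℝ) := by norm_num

theorem exists_isDDC_of_neg_one_lt_ddcExponent {α : Type*} [Fintype α] [DecidableEq α] {n d : ℕ}
    (hn : 2 ≤ n) (hcard : Fintype.card α = n) (hd : 0 < d) (hdeven : Even d)
    (hE : -1 < ddcExponent n d) :
    ∃ D : Set (FreeGroup α), IsDDC D ∧ (∀ g ∈ D, ∀ h ∈ D, (g⁻¹ * h).norm ≤ d) ∧
      (2 * n : ℝ) * (2 * n - 1 : ℝ) ^ ddcExponent n d ≤ (D.ncard : ℝ) := by
  obtain ⟨m, k, hdiam, hbal, hmE⟩ := exists_balanced_parameters hn hd hdeven hE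
  obtain ⟨e⟩ := FreeGroup.nonempty_successorCode hcard
  obtain ⟨D, hD, hnorm, hDcard⟩ := FreeGroup.exists_isDDC_of_balanced (m := m) (k := k) e
    (by omega) (by rwa [FreeGroup.card_stem, hcard])
  refine ⟨D, hD, fun g hg h hh => ?_, ?_⟩
  · linarith [FreeGroup.norm_inv_mul_le g h, hnorm g hg, hnorm h hh]
  rw [FreeGroup.card_stem, hcard, mul_assoc] at hDcard
  have hDcard' : ((n * (2 * n - 1) ^ m : ℕ) : ℝ) ≤ (D.card : ℝ) := by
    exact_mod_cast Nat.le_of_mul_le_mul_left hDcard two_pos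
  rw [Set.ncard_coe_finset]
  refine (two_mul_rpow_le_mul_pow hn hmE).trans ?_
  rwa [Nat.cast_mul, Nat.cast_pow, cast_two_mul_sub_one (by omega)] at hDcard'

theorem stmt15 (α : Type*) [Fintype α] [DecidableEq α] (n : ℕ) (hn : 2 ≤ n)
    (hcard : Fintype.card α = n) (d : ℕ) (hd : 0 < d) (hdeven : Even d) :
    ∃ D : Set (FreeGroup α), IsDDC D ∧
      (∀ g ∈ D, ∀ h ∈ D, (g⁻¹ * h).norm ≤ d) ∧
      (2 * n : ℝ) * (2 * n - 1 : ℝ) ^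
          ((d : ℝ) / 3 - (4 / 3) * Real.logb (2 * n - 1) ((d : ℝ) / 3) - 5)
        ≤ (D.ncard : ℝ) := by
  rcases le_or_gt (ddcExponent n d) (-1) with hE | hE
  · obtain ⟨r, rfl⟩ := hdeven
    exact exists_isDDC_of_ddcExponent_le hn hcard (by omega) hE
  · exact exists_isDDC_of_neg_one_lt_ddcExponent hn hcard hd hdeven hE
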